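/- Let β ∈ ℤ^m with |β| = 2k ≥ 0, k ∈ ℕ. Then P_q^{C_m}(β) = Σ_{δ∈C_k^m} c_δ^{C_m} q^k P_q^{A_m}(β−δ) and P_q^{D_m}(β) = Σ_{δ∈D_k^m} c_δ^{D_m} q^k P_q^{A_m}(β−δ). -/

import Mathlib

open scoped BigOperators

noncomputable section

/-- Integral weights of rank `m`, identified with `ℤ^m`. -/
abbrev Wt (m : ℕ) := Fin m → ℤ

/-- Rational weights of rank `m` (needed for the half-integral `ρ` of type `B`). -/
abbrev QWt (m : ℕ) := Fin m → ℚ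

/-- Coercion of an integral weight to a rational weight. -/
def castWt {m : ℕ} (β : Wt m) : QWt m := fun i => (β i : ℚ)

/-- The standard basis vector `ε_i` of `ℤ^m`. -/
def eps {m : ℕ} (i : Fin m) : Wt m := fun j => if j = i then 1 else 0

/-- `ρ_m = (m, m-1, ..., 1)`. -/
def rhoZ (m : ℕ) : Wt m := fun i => (m : ℤ) - (i : ℕ)

/-- `κ_m = (1, ..., 1)`. -/
def kappa (m : ℕ) : Wt m := fun _ => 1

/-- A partition of length `m`: a weakly decreasing element of `ℕ^m` (written in `ℤ^m`). -/
def IsPart {m : ℕ} (lam : Wt m) : Prop := Antitone lam ∧ ∀ i, 0 ≤ lam i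

/-- `|λ| = λ_1 + ⋯ + λ_m`. -/
def wtSum {m : ℕ} (lam : Wt m) : ℤ := ∑ i, lam i

/-- The conjugate partition, regarded as a partition of length `n`:
`λ'_j = #{i : λ_i ≥ j}` (with `j` one-based). -/
def conj {m : ℕ} (n : ℕ) (lam : Wt m) : Wt n :=
  fun j => ((Finset.univ.filter (fun i : Fin m => ((j : ℕ) : ℤ) < lam i)).card : ℤ)

/-- The permutation action of `S_m` on `ℤ^m`. -/
def pact {m : ℕ} (σ : Equiv.Perm (Fin m)) (β : Wt m) : Wt m := β ∘ σ.symm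

/-- The permutation action of `S_m` on `ℚ^m`. -/
def qpact {m : ℕ} (σ : Equiv.Perm (Fin m)) (β : QWt m) : QWt m := β ∘ σ.symm

/-- The dot action `σ ∘ α = σ(α + ρ_m) - ρ_m`. -/
def dotAct {m : ℕ} (σ : Equiv.Perm (Fin m)) (α : Wt m) : Wt m :=
  pact σ (α + rhoZ m) - rhoZ m

/-- The three root-system types considered in the paper. -/
inductive RT | B | C | D
deriving DecidableEq

/-- The action of a signed permutation `(σ, ε)` on `ℚ^m`: the hyperoctahedral group
`W_{B_m} = W_{C_m}` consists of all such pairs. -/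
def sact {m : ℕ} (σ : Equiv.Perm (Fin m)) (ε : Fin m → Bool) (β : QWt m) : QWt m :=
  fun i => (if ε i then -1 else 1) * β (σ.symm i)

/-- `(-1)^{l(w)}` for a signed permutation `w = (σ, ε)`: the sign character of the
hyperoctahedral group, which takes value `-1` on each Coxeter generator. -/
def ssign {m : ℕ} (σ : Equiv.Perm (Fin m)) (ε : Fin m → Bool) : ℤ :=
  (Equiv.Perm.sign σ : ℤ) * ∏ i, (if ε i then -1 else 1)

/-- Which signed permutations belong to the Weyl group of type `g`: for `B` and `C` all of
them, for `D` only those changing an even number of signs. -/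
def allowed (g : RT) {m : ℕ} (ε : Fin m → Bool) : Prop :=
  g = RT.D → (∏ i, (if ε i then (-1 : ℤ) else 1)) = 1

instance (g : RT) {m : ℕ} : DecidablePred (allowed g (m := m)) := by
  unfold allowed; infer_instance

/-- The Laurent polynomial ring `ℤ[x_1^{±1/2}, ..., x_m^{±1/2}]` (allowing all rational
exponents), realized as the group algebra of `ℚ^m`. -/
abbrev LQ (m : ℕ) := AddMonoidAlgebra ℤ (QWt m)

/-- The monomial `x^β`. -/
def XQ {m : ℕ} (β : QWt m) : LQ m := AddMonoidAlgebra.single β 1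

instance {m : ℕ} : IsDomain (LQ m) := NoZeroDivisors.to_isDomain _

/-- The fraction field of the Laurent polynomial ring, in which Schur functions live. -/
abbrev KK (m : ℕ) := FractionRing (LQ m)

def toK {m : ℕ} (p : LQ m) : KK m := algebraMap (LQ m) (KK m) p

/-- The half-sum of positive roots: `ρ_B = ρ_m - (1/2,…,1/2)`, `ρ_C = ρ_m`,
`ρ_D = ρ_m - (1,…,1)`. -/
def rhoG (g : RT) (m : ℕ) : QWt m :=
  match g with
  | RT.B => fun i => ((m : ℚ) - (i : ℕ)) - 1/2
  | RT.C => fun i => (m : ℚ) - (i : ℕ)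
  | RT.D => fun i => ((m : ℚ) - (i : ℕ)) - 1

/-- `a_β = Σ_{w ∈ W_g} (-1)^{l(w)} x^{w(β)}`. -/
def aalt (g : RT) {m : ℕ} (β : QWt m) : LQ m :=
  ∑ σ : Equiv.Perm (Fin m), ∑ ε ∈ Finset.univ.filter (allowed g),
    ssign σ ε • XQ (sact σ ε β)

/-- The Schur function `s_ν^g = a_{ν+ρ_g} / a_{ρ_g}`. -/
def SchurF (g : RT) {m : ℕ} (ν : QWt m) : KK m :=
  toK (aalt g (ν + rhoG g m)) / toK (aalt g (rhoG g m))

/-- The one-row weight `(k, 0, …, 0)`. -/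
def rowWt (m : ℕ) (k : ℤ) : QWt m := fun i => if (i : ℕ) = 0 then (k : ℚ) else 0

/-- The one-column weight `(1^p, 0^{m-p})`. -/
def colWt (m : ℕ) (p : ℤ) : QWt m := fun i => if ((i : ℕ) : ℤ) < p then 1 else 0

/-- `h_k^g = s_{(k,0,…,0)}^g` for `k ≥ 0`, and `0` for `k < 0`. -/
def hF (g : RT) (m : ℕ) (k : ℤ) : KK m := if 0 ≤ k then SchurF g (rowWt m k) else 0

/-- `H_k^g = h_k^g + h_{k-2}^g + ⋯ + h_{k mod 2}^g` for `k ≥ 0`, and `0` for `k < 0`. -/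
def HF (g : RT) (m : ℕ) (k : ℤ) : KK m :=
  if 0 ≤ k then ∑ j ∈ Finset.range (k.toNat / 2 + 1), hF g m (k - 2 * j) else 0

/-- `e_p^g = s^g_{(1^p,0^{m-p})}` for `0 ≤ p ≤ m`, `e_p^g = e^g_{2m-p}` for `m < p ≤ 2m`,
and `0` otherwise. -/
def eF (g : RT) (m : ℕ) (p : ℤ) : KK m :=
  if 0 ≤ p ∧ p ≤ (m : ℤ) then SchurF g (colWt m p)
  else if (m : ℤ) < p ∧ p ≤ 2 * m then SchurF g (colWt m (2 * m - p))
  else 0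

/-- `E_k^g = e_k^g + e_{k-2}^g + ⋯ + e_{k mod 2}^g` for `k ≥ 0`, and `0` for `k < 0`. -/
def EF (g : RT) (m : ℕ) (k : ℤ) : KK m :=
  if 0 ≤ k then ∑ j ∈ Finset.range (k.toNat / 2 + 1), eF g m (k - 2 * j) else 0

/-- The `m × m` determinant `u_α^g` (in the one-row characters `h^g`). -/
def uDet (g : RT) {m : ℕ} (α : Wt m) : KK m :=
  Matrix.det (Matrix.of fun i j : Fin m =>
    if (j : ℕ) = 0 then hF g m (α i - (i : ℕ))
    else hF g m (α i - (i : ℕ) + (j : ℕ)) + hF g m (α i - (i : ℕ) - (j : ℕ)))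

/-- The `n × n` determinant `v_β^g` (in the one-column characters `e^g` of rank `m`). -/
def vDet (g : RT) (m : ℕ) {n : ℕ} (β : Wt n) : KK m :=
  Matrix.det (Matrix.of fun i j : Fin n =>
    if (j : ℕ) = 0 then eF g m (β i - (i : ℕ))
    else eF g m (β i - (i : ℕ) + (j : ℕ)) + eF g m (β i - (i : ℕ) - (j : ℕ)))

/-- `h_α^g = h^g_{α_1} ⋯ h^g_{α_m}` (and similarly for arbitrary index length). -/
def hProd (g : RT) (m : ℕ) {n : ℕ} (α : Wt n) : KK m := ∏ i, hF g m (α i)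

def HProd (g : RT) (m : ℕ) {n : ℕ} (α : Wt n) : KK m := ∏ i, HF g m (α i)

def eProd (g : RT) (m : ℕ) {n : ℕ} (α : Wt n) : KK m := ∏ i, eF g m (α i)

def EProd (g : RT) (m : ℕ) {n : ℕ} (α : Wt n) : KK m := ∏ i, EF g m (α i)

/-- The Laurent polynomial ring `ℤ[x_1^{±1}, ..., x_m^{±1}]`, realized as the group
algebra of `ℤ^m`. -/
abbrev LZ (m : ℕ) := AddMonoidAlgebra ℤ (Wt m)

/-- The monomial `x^β`. -/
def XZ {m : ℕ} (β : Wt m) : LZ m := AddMonoidAlgebra.single β 1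

/-- `φ_m = ∏_{1≤i<j≤m} (1 - x_i/x_j) · ∏_{1≤r<s≤m} (1 - 1/(x_r x_s))`; its coefficients
are the function `a` (resp. `f_{q=1}` up to expansion conventions). -/
def phiSmall (m : ℕ) : LZ m :=
  (∏ p ∈ Finset.univ.filter (fun p : Fin m × Fin m => p.1 < p.2),
      (1 - XZ (eps p.1 - eps p.2))) *
  (∏ p ∈ Finset.univ.filter (fun p : Fin m × Fin m => p.1 < p.2),
      (1 - XZ (-(eps p.1 + eps p.2))))

/-- `Φ_m = ∏_{1≤i<j≤m} (1 - x_i/x_j) · ∏_{1≤r≤s≤m} (1 - 1/(x_r x_s))`. -/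
def phiBig (m : ℕ) : LZ m :=
  (∏ p ∈ Finset.univ.filter (fun p : Fin m × Fin m => p.1 < p.2),
      (1 - XZ (eps p.1 - eps p.2))) *
  (∏ p ∈ Finset.univ.filter (fun p : Fin m × Fin m => p.1 ≤ p.2),
      (1 - XZ (-(eps p.1 + eps p.2))))

/-- The coefficient `a(γ)` of `x^γ` in `φ_m`. -/
def coeffSmall (m : ℕ) (γ : Wt m) : ℤ := (phiSmall m).coeff γ

/-- The coefficient `A(γ)` of `x^γ` in `Φ_m`. -/
def coeffBig (m : ℕ) (γ : Wt m) : ℤ := (phiBig m).coeff γ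

/-- The generic `q`-partition function attached to a finite family `v` of vectors:
the coefficient of `q^d` counts the families `(n_i)` of nonnegative integers with
`Σ n_i = d` and `Σ n_i v_i = β`.  This encodes the coefficient of `x^β` in the formal
series expansion of `∏_i (1 - q x^{v_i})^{-1}` as a power series in `q`. -/
def PqPS {m : ℕ} {ι : Type} [Fintype ι] (v : ι → Wt m) (β : QWt m) : PowerSeries ℤ :=
  PowerSeries.mk fun d =>
    (Nat.card {n : ι → ℕ // (∑ i, n i) = d ∧ castWt (∑ i, (n i : ℤ) • v i) = β} : ℤ)

/-- The specialization at `q = 1` of `PqPS`: the number of ways to write `β` as a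
nonnegative integral combination of the vectors `v_i`. -/
def POne {m : ℕ} {ι : Type} [Fintype ι] (v : ι → Wt m) (β : Wt m) : ℤ :=
  (Nat.card {n : ι → ℕ // (∑ i, (n i : ℤ) • v i) = β} : ℤ)

/-- Index type for the pairs `1 ≤ i < j ≤ m`. -/
abbrev IdxLT (m : ℕ) := {p : Fin m × Fin m // p.1 < p.2}

/-- Index type for the pairs `1 ≤ i ≤ j ≤ m`. -/
abbrev IdxLE (m : ℕ) := {p : Fin m × Fin m // p.1 ≤ p.2}

/-- The positive roots `ε_i - ε_j` (`i < j`) of type `A_m`. -/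
def rootsA (m : ℕ) : IdxLT m → Wt m := fun p => eps p.1.1 - eps p.1.2

/-- The positive roots of type `B_m`. -/
def rootsB (m : ℕ) : IdxLT m ⊕ IdxLT m ⊕ Fin m → Wt m
  | .inl p => eps p.1.1 - eps p.1.2
  | .inr (.inl p) => eps p.1.1 + eps p.1.2
  | .inr (.inr i) => eps i

/-- The positive roots of type `C_m` (note `2ε_i = ε_i + ε_i`). -/
def rootsC (m : ℕ) : IdxLT m ⊕ IdxLE m → Wt m
  | .inl p => eps p.1.1 - eps p.1.2
  | .inr p => eps p.1.1 + eps p.1.2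

/-- The positive roots of type `D_m`. -/
def rootsD (m : ℕ) : IdxLT m ⊕ IdxLT m → Wt m
  | .inl p => eps p.1.1 - eps p.1.2
  | .inr p => eps p.1.1 + eps p.1.2

/-- The vectors `ε_i - ε_j` (`i < j`) and `-(ε_r + ε_s)` (`r < s`), whose `q`-partition
function is `f_q`. -/
def vfSmall (m : ℕ) : IdxLT m ⊕ IdxLT m → Wt m
  | .inl p => eps p.1.1 - eps p.1.2
  | .inr p => -(eps p.1.1 + eps p.1.2)

/-- The vectors `ε_i - ε_j` (`i < j`) and `-(ε_r + ε_s)` (`r ≤ s`), whose `q`-partition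
function is `F_q`. -/
def vfBig (m : ℕ) : IdxLT m ⊕ IdxLE m → Wt m
  | .inl p => eps p.1.1 - eps p.1.2
  | .inr p => -(eps p.1.1 + eps p.1.2)

/-- `f_q`. -/
def fq {m : ℕ} (β : Wt m) : PowerSeries ℤ := PqPS (vfSmall m) (castWt β)

/-- `F_q`. -/
def Fq {m : ℕ} (β : Wt m) : PowerSeries ℤ := PqPS (vfBig m) (castWt β)

/-- The `q`-analogue of Kostant's partition function, type `A_m`. -/
def PqA {m : ℕ} (β : QWt m) : PowerSeries ℤ := PqPS (rootsA m) β

/-- The `q`-analogue of Kostant's partition function, types `B_m`, `C_m`, `D_m`. -/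
def PqG (g : RT) {m : ℕ} (β : QWt m) : PowerSeries ℤ :=
  match g with
  | RT.B => PqPS (rootsB m) β
  | RT.C => PqPS (rootsC m) β
  | RT.D => PqPS (rootsD m) β

/-- The Kostka–Foulkes polynomial
`K^g_{λ,μ}(q) = Σ_{w ∈ W_g} (-1)^{l(w)} P_q^g(w(λ+ρ_g) - (μ+ρ_g))`. -/
def KF (g : RT) {m : ℕ} (lam mu : QWt m) : PowerSeries ℤ :=
  ∑ σ : Equiv.Perm (Fin m), ∑ ε ∈ Finset.univ.filter (allowed g),
    ssign σ ε • PqG g (sact σ ε (lam + rhoG g m) - (mu + rhoG g m))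

/-- The Kostka–Foulkes polynomial of type `A_m`,
`K^{A_m}_{λ,γ}(q) = Σ_{σ ∈ S_m} (-1)^{l(σ)} P_q^{A_m}(σ(λ+ρ_m) - (γ+ρ_m))`,
defined for arbitrary `γ ∈ ℤ^m`. -/
def KFA {m : ℕ} (lam gamma : Wt m) : PowerSeries ℤ :=
  ∑ σ : Equiv.Perm (Fin m),
    (Equiv.Perm.sign σ : ℤ) • PqA (castWt (pact σ (lam + rhoZ m) - (gamma + rhoZ m)))

/-- `u_{λ,μ}(q) = Σ_{σ ∈ S_m} (-1)^{l(σ)} f_q(σ(λ+ρ_m) - μ - ρ_m)`. -/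
def uP {m : ℕ} (lam mu : Wt m) : PowerSeries ℤ :=
  ∑ σ : Equiv.Perm (Fin m),
    (Equiv.Perm.sign σ : ℤ) • fq (pact σ (lam + rhoZ m) - mu - rhoZ m)

/-- `U_{λ,μ}(q) = Σ_{σ ∈ S_m} (-1)^{l(σ)} F_q(σ(λ+ρ_m) - μ - ρ_m)`. -/
def UP {m : ℕ} (lam mu : Wt m) : PowerSeries ℤ :=
  ∑ σ : Equiv.Perm (Fin m),
    (Equiv.Perm.sign σ : ℤ) • Fq (pact σ (lam + rhoZ m) - mu - rhoZ m)

/-- `f_q` specialized at `q = 1`. -/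
def fOne {m : ℕ} (β : Wt m) : ℤ := POne (vfSmall m) β

/-- `F_q` specialized at `q = 1`. -/
def FOne {m : ℕ} (β : Wt m) : ℤ := POne (vfBig m) β

/-- `u_{λ,μ}(1)`. -/
def uP1 {m : ℕ} (lam mu : Wt m) : ℤ :=
  ∑ σ : Equiv.Perm (Fin m),
    (Equiv.Perm.sign σ : ℤ) * fOne (pact σ (lam + rhoZ m) - mu - rhoZ m)

/-- `U_{λ,μ}(1)`. -/
def UP1 {m : ℕ} (lam mu : Wt m) : ℤ :=
  ∑ σ : Equiv.Perm (Fin m),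
    (Equiv.Perm.sign σ : ℤ) * FOne (pact σ (lam + rhoZ m) - mu - rhoZ m)

/-- `λ̂ = (n - λ_m, …, n - λ_1)`. -/
def hatP {m : ℕ} (n : ℤ) (lam : Wt m) : Wt m := fun i => n - lam i.rev

/-- The involution `I(α_1, …, α_m) = (-α_m, …, -α_1)`. -/
def invI {m : ℕ} (α : Wt m) : Wt m := fun i => -α i.rev

/-- `σ*`, defined by `σ*(k) = σ(m - k + 1)`. -/
def starPerm {m : ℕ} (σ : Equiv.Perm (Fin m)) : Equiv.Perm (Fin m) :=
  (Fin.revPerm).trans σ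

/-- The number of ways to write `β = Σ_{1≤r≤s≤m} e_{r,s} (ε_r + ε_s)`, `e_{r,s} ∈ ℕ`. -/
def cC (m : ℕ) (β : Wt m) : ℕ :=
  Nat.card {e : IdxLE m → ℕ // (∑ p, (e p : ℤ) • (eps p.1.1 + eps p.1.2)) = β}

/-- The number of ways to write `β = Σ_{1≤r<s≤m} e_{r,s} (ε_r + ε_s)`, `e_{r,s} ∈ ℕ`. -/
def cD (m : ℕ) (β : Wt m) : ℕ :=
  Nat.card {e : IdxLT m → ℕ // (∑ p, (e p : ℤ) • (eps p.1.1 + eps p.1.2)) = β}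

/-- The set `C_k^m`. -/
def setC (m k : ℕ) : Set (Wt m) :=
  {β | (∃ e : IdxLE m → ℕ, (∑ p, (e p : ℤ) • (eps p.1.1 + eps p.1.2)) = β) ∧
       wtSum β = 2 * k}

/-- The set `D_k^m`. -/
def setD (m k : ℕ) : Set (Wt m) :=
  {β | (∃ e : IdxLT m → ℕ, (∑ p, (e p : ℤ) • (eps p.1.1 + eps p.1.2)) = β) ∧
       wtSum β = 2 * k}

/-!
Every positive root of type `C_m` or `D_m` is either a root `ε_i - ε_j` of `A_m`, of degree `0`
for `|·|`, or a vector `ε_r + ε_s` of degree `2`. In a decomposition of `β` with `|β| = 2k` the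
second kind therefore occurs exactly `k` times, contributing `q^k` and some `δ ∈ C_k^m`
(resp. `D_k^m`) in `c_δ` ways, and the remainder is a decomposition of `β - δ` into positive roots
of `A_m`.
-/

lemma castWt_injective {m : ℕ} : Function.Injective (castWt (m := m)) :=
  fun _ _ h => funext fun i => by simpa [castWt] using congrFun h i

lemma coeff_PqPS_castWt {m : ℕ} {ι : Type} [Fintype ι] (v : ι → Wt m) (β : Wt m) (d : ℕ) :
    PowerSeries.coeff d (PqPS v (castWt β)) =
      Nat.card {n : ι → ℕ // (∑ i, n i) = d ∧ (∑ i, (n i : ℤ) • v i) = β} := by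
  rw [PqPS, PowerSeries.coeff_mk]
  exact congrArg _ (Nat.card_congr (Equiv.subtypeEquivRight fun n =>
    and_congr_right fun _ => castWt_injective.eq_iff))

lemma coeff_X_pow_mul_PqPS_castWt {m : ℕ} {ι : Type} [Fintype ι] (v : ι → Wt m) (β : Wt m)
    (k d : ℕ) :
    PowerSeries.coeff d ((PowerSeries.X : PowerSeries ℤ) ^ k * PqPS v (castWt β)) =
      Nat.card {n : ι → ℕ // (∑ i, n i) + k = d ∧ (∑ i, (n i : ℤ) • v i) = β} := by
  rw [PowerSeries.coeff_X_pow_mul']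
  split_ifs with hkd
  · rw [coeff_PqPS_castWt]
    exact congrArg _ (Nat.card_congr (Equiv.subtypeEquivRight fun n =>
      and_congr_left fun _ => by omega))
  · have : IsEmpty {n : ι → ℕ // (∑ i, n i) + k = d ∧ (∑ i, (n i : ℤ) • v i) = β} :=
      ⟨fun n => hkd (by omega)⟩
    simp

lemma finite_setOf_sum_eq {κ : Type} [Fintype κ] (k : ℕ) :
    {e : κ → ℕ | ∑ p, e p = k}.Finite := by
  classical
  exact (Finset.piAntidiag Finset.univ k).finite_toSet.subset fun e he => by simpa using he

lemma finite_of_sum_eq {κ : Type} [Fintype κ] {P : (κ → ℕ) → Prop} (k : ℕ)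
    (hP : ∀ e, P e → ∑ p, e p = k) : Finite {e : κ → ℕ // P e} :=
  ((finite_setOf_sum_eq k).subset hP).to_subtype

section Graded

variable {m : ℕ} {ι κ : Type} [Fintype ι] [Fintype κ] (ℓ : Wt m →+ ℤ) {r : ℤ}

/-- For `ℓ = wtSumHom m` and `c = 2 * k` this is `setC m k` or `setD m k`, according to `w`. -/
def gradedCombos (w : κ → Wt m) (c : ℤ) : Set (Wt m) :=
  {δ | (∃ e : κ → ℕ, (∑ p, (e p : ℤ) • w p) = δ) ∧ ℓ δ = c}

variable {ℓ}

lemma map_sum_natCast_smul {w : κ → Wt m} (hw : ∀ p, ℓ (w p) = r) (e : κ → ℕ) :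
    ℓ (∑ p, (e p : ℤ) • w p) = r * ∑ p, (e p : ℤ) := by
  simp only [map_sum, map_zsmul, hw, smul_eq_mul, Finset.mul_sum, mul_comm]

lemma sum_eq_of_map_sum_natCast_smul {w : κ → Wt m} (hw : ∀ p, ℓ (w p) = r) (hr : r ≠ 0)
    {e : κ → ℕ} {k : ℕ} (he : ℓ (∑ p, (e p : ℤ) • w p) = r * k) : ∑ p, e p = k := by
  rw [map_sum_natCast_smul hw] at he
  exact_mod_cast mul_left_cancel₀ hr he

lemma gradedCombos_finite {w : κ → Wt m} (hw : ∀ p, ℓ (w p) = r) (hr : r ≠ 0) (k : ℕ) :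
    (gradedCombos ℓ w (r * k)).Finite := by
  refine ((finite_setOf_sum_eq k).image fun e => ∑ p, (e p : ℤ) • w p).subset ?_
  rintro δ ⟨⟨e, rfl⟩, hδ⟩
  exact ⟨e, sum_eq_of_map_sum_natCast_smul hw hr hδ, rfl⟩

lemma sum_natCast_smul_sumElim (u : ι → Wt m) (w : κ → Wt m) (n : ι ⊕ κ → ℕ) :
    ∑ j, (n j : ℤ) • Sum.elim u w j =
      ∑ i, (n (.inl i) : ℤ) • u i + ∑ p, (n (.inr p) : ℤ) • w p :=
  Fintype.sum_sum_type _

/-- Since `ℓ` vanishes on `u`, the degree of `β` forces the `κ`-part `e` of `n` to satisfy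
`∑ e = k`; `n` is sorted by the weight `δ = ∑ e_p w_p` that `e` contributes. -/
def sumElimFamilyEquiv {u : ι → Wt m} {w : κ → Wt m} (hu : ∀ i, ℓ (u i) = 0)
    (hw : ∀ p, ℓ (w p) = r) (hr : r ≠ 0) {β : Wt m} {k : ℕ} (hβ : ℓ β = r * k)
    (hS : (gradedCombos ℓ w (r * k)).Finite) (d : ℕ) :
    {n : ι ⊕ κ → ℕ // (∑ j, n j) = d ∧ (∑ j, (n j : ℤ) • Sum.elim u w j) = β} ≃
      Σ δ : hS.toFinset, {e : κ → ℕ // (∑ p, (e p : ℤ) • w p) = δ} ×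
        {a : ι → ℕ // (∑ i, a i) + k = d ∧ (∑ i, (a i : ℤ) • u i) = β - δ} where
  toFun n :=
    have hsplit := sum_natCast_smul_sumElim u w n.1 ▸ n.2.2
    have hdeg : ℓ (∑ p, (n.1 (.inr p) : ℤ) • w p) = r * k := by
      simpa only [map_add, map_sum_natCast_smul hu, zero_mul, zero_add, hβ]
        using congrArg ℓ hsplit
    have hsum := n.2.1
    ⟨⟨_, hS.mem_toFinset.mpr ⟨⟨_, rfl⟩, hdeg⟩⟩, ⟨fun p => n.1 (.inr p), rfl⟩,
      ⟨fun i => n.1 (.inl i), by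
        rwa [Fintype.sum_sum_type, sum_eq_of_map_sum_natCast_smul hw hr hdeg] at hsum,
        eq_sub_of_add_eq hsplit⟩⟩
  invFun x :=
    have hk := sum_eq_of_map_sum_natCast_smul hw hr (x.2.1.2 ▸ (hS.mem_toFinset.mp x.1.2).2)
    ⟨Sum.elim x.2.2.1 x.2.1.1, by
      simpa only [Fintype.sum_sum_type, Sum.elim_inl, Sum.elim_inr, hk] using x.2.2.2.1, by
      rw [sum_natCast_smul_sumElim]
      simp only [Sum.elim_inl, Sum.elim_inr, x.2.2.2.2, x.2.1.2, sub_add_cancel]⟩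
  left_inv n := Subtype.ext (funext fun j => by cases j <;> rfl)
  right_inv := by
    rintro ⟨⟨δ, hδ⟩, ⟨e, he⟩, a⟩
    obtain rfl : ∑ p, (e p : ℤ) • w p = δ := he
    rfl

theorem PqPS_sumElim_eq_finsum {u : ι → Wt m} {w : κ → Wt m} (hu : ∀ i, ℓ (u i) = 0)
    (hw : ∀ p, ℓ (w p) = r) (hr : r ≠ 0) (β : Wt m) (k : ℕ) (hβ : ℓ β = r * k) :
    PqPS (Sum.elim u w) (castWt β) =
      ∑ᶠ δ ∈ gradedCombos ℓ w (r * k),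
        (Nat.card {e : κ → ℕ // (∑ p, (e p : ℤ) • w p) = δ} : ℤ) •
          ((PowerSeries.X : PowerSeries ℤ) ^ k * PqPS u (castWt (β - δ))) := by
  have hS := gradedCombos_finite hw hr k
  rw [finsum_mem_eq_finite_toFinset_sum _ hS]
  ext d
  have hfin (δ : hS.toFinset) : Finite ({e : κ → ℕ // (∑ p, (e p : ℤ) • w p) = δ} ×
      {a : ι → ℕ // (∑ i, a i) + k = d ∧ (∑ i, (a i : ℤ) • u i) = β - δ}) := by
    have := finite_of_sum_eq (P := fun e => (∑ p, (e p : ℤ) • w p) = δ) k fun e he =>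
      sum_eq_of_map_sum_natCast_smul hw hr (he ▸ (hS.mem_toFinset.mp δ.2).2)
    have := finite_of_sum_eq
      (P := fun a => (∑ i, a i) + k = d ∧ (∑ i, (a i : ℤ) • u i) = β - δ) (d - k)
      fun a ha => by omega
    infer_instance
  rw [coeff_PqPS_castWt, Nat.card_congr (sumElimFamilyEquiv hu hw hr hβ hS d), Nat.card_sigma,
    map_sum, ← Finset.sum_coe_sort hS.toFinset]
  push_cast
  refine Finset.sum_congr rfl fun δ _ => ?_
  rw [map_zsmul, coeff_X_pow_mul_PqPS_castWt, Nat.card_prod, smul_eq_mul]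
  push_cast
  rfl

end Graded

def wtSumHom (m : ℕ) : Wt m →+ ℤ where
  toFun := wtSum
  map_zero' := by simp [wtSum]
  map_add' x y := by simp [wtSum, Finset.sum_add_distrib]

lemma wtSumHom_eps {m : ℕ} (i : Fin m) : wtSumHom m (eps i) = 1 := by
  change ∑ j, eps i j = 1
  simp [eps]

lemma wtSumHom_rootsA {m : ℕ} (p : IdxLT m) : wtSumHom m (rootsA m p) = 0 := by
  simp [rootsA, wtSumHom_eps]

lemma wtSumHom_eps_add_eps {m : ℕ} (i j : Fin m) : wtSumHom m (eps i + eps j) = 2 := by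
  rw [map_add, wtSumHom_eps, wtSumHom_eps, one_add_one_eq_two]

lemma rootsC_eq_sumElim (m : ℕ) :
    rootsC m = Sum.elim (rootsA m) fun p : IdxLE m => eps p.1.1 + eps p.1.2 := by
  funext x; rcases x with p | p <;> rfl

lemma rootsD_eq_sumElim (m : ℕ) :
    rootsD m = Sum.elim (rootsA m) fun p : IdxLT m => eps p.1.1 + eps p.1.2 := by
  funext x; rcases x with p | p <;> rfl

theorem stmt18_general (m : ℕ) (β : Wt m) (k : ℕ) (hk : wtSum β = 2 * k) :
    PqG RT.C (castWt β) =
      ∑ᶠ δ ∈ setC m k,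
        (cC m δ : ℤ) • ((PowerSeries.X : PowerSeries ℤ) ^ k * PqA (castWt (β - δ))) ∧
    PqG RT.D (castWt β) =
      ∑ᶠ δ ∈ setD m k,
        (cD m δ : ℤ) • ((PowerSeries.X : PowerSeries ℤ) ^ k * PqA (castWt (β - δ))) := by
  refine ⟨?_, ?_⟩
  · change PqPS (rootsC m) _ = _
    rw [rootsC_eq_sumElim]
    exact PqPS_sumElim_eq_finsum wtSumHom_rootsA (fun _ => wtSumHom_eps_add_eps _ _)
      two_ne_zero β k hk
  · change PqPS (rootsD m) _ = _
    rw [rootsD_eq_sumElim]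
    exact PqPS_sumElim_eq_finsum wtSumHom_rootsA (fun _ => wtSumHom_eps_add_eps _ _)
      two_ne_zero β k hk

/-- For `β ∈ ℤ^m` with `|β| = 2k ≥ 0`:
`P_q^{C_m}(β) = Σ_{δ∈C_k^m} c_δ^{C_m} q^k P_q^{A_m}(β-δ)` and
`P_q^{D_m}(β) = Σ_{δ∈D_k^m} c_δ^{D_m} q^k P_q^{A_m}(β-δ)`. -/
theorem stmt18 (m : ℕ) (hm : 1 ≤ m) (β : Wt m) (k : ℕ) (hk : wtSum β = 2 * k) :
    PqG RT.C (castWt β) =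
      ∑ᶠ δ ∈ setC m k,
        (cC m δ : ℤ) • ((PowerSeries.X : PowerSeries ℤ) ^ k * PqA (castWt (β - δ))) ∧
    PqG RT.D (castWt β) =
      ∑ᶠ δ ∈ setD m k,
        (cD m δ : ℤ) • ((PowerSeries.X : PowerSeries ℤ) ^ k * PqA (castWt (β - δ))) :=
  stmt18_general m β k hk

end
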